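/- Let 0 ≤ h ≤ (1/2)·ln(2+√3) and 0 < β ≤ (3/2)·cosh²(h). Then the fixed point equation Γ_{β,h}(λ) = λ has no positive solution: for every λ > 0, Γ_{β,h}(λ) < λ. -/

import Mathlib

/-!
Write `g(x) = tanh (x + h) + tanh (x - h)`, an odd function with `g'(0) = 2 / cosh² h`.
With `u = sinh² x` and `v = sinh² h`, one has
`g'(x) = 2 (1 + u + v + 2uv) / (1 + u + v)²`, and `g'(x) < g'(0)` reduces to
`u (1 + u - v - 2v²) > 0`, which holds for `x ≠ 0` as soon as `v ≤ 1/2`, i.e. `cosh² h ≤ 3/2`,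
i.e. `cosh (2h) ≤ 2 = cosh (log (2 + √3))`. By the mean value theorem `g(x) < g'(0) x` for
`x > 0`, and `β / 3 · g'(0) ≤ 1` is exactly `β ≤ β_c(h)`.
-/

open Real Set

lemma hasDerivAt_tanh (x : ℝ) : HasDerivAt tanh (1 / cosh x ^ 2) x := by
  have hquot := (hasDerivAt_sinh x).div (hasDerivAt_cosh x) (cosh_pos x).ne'
  have htanh : sinh / cosh = tanh := funext fun y => (tanh_eq_sinh_div_cosh y).symm
  rw [htanh, ← sq, ← sq, cosh_sq_sub_sinh_sq] at hquot
  exact hquot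

lemma cosh_sq_le_three_halves {h : ℝ} (hh : |h| ≤ 1 / 2 * log (2 + √3)) :
    cosh h ^ 2 ≤ 3 / 2 := by
  have hcosh_log : cosh (log (2 + √3)) = 2 := by
    rw [cosh_log (by positivity)]
    field_simp
    nlinarith [sq_sqrt (show (0 : ℝ) ≤ 3 by norm_num)]
  have hcosh_two_mul : cosh (2 * h) ≤ cosh (log (2 + √3)) := by
    rw [cosh_le_cosh, abs_mul, abs_two, abs_of_pos (log_pos (by linarith [sqrt_nonneg 3]))]
    linarith
  rw [hcosh_log, cosh_two_mul, cosh_sq'] at hcosh_two_mul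
  rw [cosh_sq']
  linarith

lemma inv_cosh_sq_add_add_inv_cosh_sq_sub_lt {x h : ℝ} (hh : cosh h ^ 2 ≤ 3 / 2) (hx : x ≠ 0) :
    1 / cosh (x + h) ^ 2 + 1 / cosh (x - h) ^ 2 < 2 / cosh h ^ 2 := by
  set u := sinh x ^ 2
  set v := sinh h ^ 2
  have hu : 0 < u := by positivity [sinh_ne_zero.mpr hx]
  have hv : 0 ≤ v := sq_nonneg _
  have hv' : v ≤ 1 / 2 := by rw [cosh_sq'] at hh; linarith
  have hmul : cosh (x + h) * cosh (x - h) = 1 + u + v := by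
    rw [cosh_add, cosh_sub]
    linear_combination cosh h ^ 2 * cosh_sq' x + (1 + u) * cosh_sq' h
  have hsq_add : cosh (x + h) ^ 2 + cosh (x - h) ^ 2 = 2 * (1 + u + v + 2 * u * v) := by
    rw [cosh_add, cosh_sub]
    linear_combination 2 * cosh h ^ 2 * cosh_sq' x + 2 * (1 + u) * cosh_sq' h
  have hp := cosh_pos (x + h)
  have hq := cosh_pos (x - h)
  calc 1 / cosh (x + h) ^ 2 + 1 / cosh (x - h) ^ 2
      = (cosh (x + h) ^ 2 + cosh (x - h) ^ 2) / (cosh (x + h) * cosh (x - h)) ^ 2 := by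
        field_simp
        ring
    _ = 2 * (1 + u + v + 2 * u * v) / (1 + u + v) ^ 2 := by rw [hsq_add, hmul]
    _ < 2 / (1 + v) := by
        rw [div_lt_div_iff₀ (by positivity) (by positivity)]
        nlinarith [mul_pos hu (show 0 < 1 + u - v - 2 * v ^ 2 by nlinarith)]
    _ = 2 / cosh h ^ 2 := by rw [cosh_sq']

lemma tanh_add_add_tanh_sub_lt {x h : ℝ} (hh : cosh h ^ 2 ≤ 3 / 2) (hx : 0 < x) :
    tanh (x + h) + tanh (x - h) < 2 / cosh h ^ 2 * x := by
  set g : ℝ → ℝ := fun y => tanh (y + h) + tanh (y - h)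
  have hg : ∀ y, HasDerivAt g (1 / cosh (y + h) ^ 2 + 1 / cosh (y - h) ^ 2) y := fun y =>
    (((hasDerivAt_tanh _).comp y ((hasDerivAt_id y).add_const h)).add
      ((hasDerivAt_tanh _).comp y ((hasDerivAt_id y).sub_const h))).congr_deriv (by simp)
  have hg0 : g 0 = 0 := by simp [g, tanh_neg]
  obtain ⟨c, hc, hslope⟩ := exists_hasDerivAt_eq_slope g _ hx
    (fun y _ => (hg y).continuousAt.continuousWithinAt) (fun y _ => hg y)
  rw [hg0, sub_zero, sub_zero] at hslope
  have hlt := inv_cosh_sq_add_add_inv_cosh_sq_sub_lt hh hc.1.ne'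
  rw [hslope, div_lt_iff₀ hx] at hlt
  exact hlt

/-- For `0 ≤ h ≤ (1/2)ln(2+√3)` and `0 < β ≤ (3/2)cosh²h`, the fixed point
equation `Γ_{β,h}(x) = x` has no positive solution: `Γ_{β,h}(x) < x` for all
`x > 0`. -/
theorem no_positive_fixed_point (β h : ℝ) (hβ : 0 < β) (hh : 0 ≤ h)
    (hh' : h ≤ 1 / 2 * Real.log (2 + Real.sqrt 3))
    (hβ' : β ≤ 3 / 2 * Real.cosh h ^ 2)
    (Γ : ℝ → ℝ)
    (hΓ : ∀ x, Γ x = β / 3 * (Real.tanh (x + h) + Real.tanh (x - h))) :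
    ∀ x : ℝ, 0 < x → Γ x < x := by
  intro x hx
  have hcosh : cosh h ^ 2 ≤ 3 / 2 := cosh_sq_le_three_halves (by rwa [abs_of_nonneg hh])
  calc Γ x = β / 3 * (tanh (x + h) + tanh (x - h)) := hΓ x
    _ < β / 3 * (2 / cosh h ^ 2 * x) := by gcongr; exact tanh_add_add_tanh_sub_lt hcosh hx
    _ = β / (3 / 2 * cosh h ^ 2) * x := by field_simp
    _ ≤ x := mul_le_of_le_one_left hx.le ((div_le_one (by positivity)).mpr hβ')
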